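/- arXiv:quant-ph/0301072 — 2 statements merged into one kernel-verified Lean document; each statement's English description precedes it below -/
import Mathlib

section
/- For any nonzero vector c ∈ ℂ^d achieving equality |supp(c)| · |supp(ĉ)| = d in the discrete support uncertainty relation, c has the form c_l = α · η^{βl} · δ_{0,(l+γ) mod d₁} for some divisor d₁ of d, nonzero α ∈ ℂ, and integers β, γ. -/
open scoped BigOperators Classical ComplexOrder

/-- The primitive `d`-th root of unity `η = e^{2πi/d}`. -/
noncomputable def eta (d : ℕ) : ℂ := Complex.exp (2 * (Real.pi : ℂ) * Complex.I / d)

/-- Discrete Fourier transform: `ĉ_k = (1/√d) Σ_l η^{kl} c_l`. -/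
noncomputable def dft (d : ℕ) (c : Fin d → ℂ) : Fin d → ℂ := fun k =>
  (1 / (Real.sqrt d : ℂ)) * ∑ l : Fin d, eta d ^ ((k : ℕ) * (l : ℕ)) * c l

/-- Number of nonzero components of a vector. -/
noncomputable def suppCard (d : ℕ) (c : Fin d → ℂ) : ℕ :=
  (Finset.univ.filter fun l => c l ≠ 0).card

/-!
By Plancherel and Cauchy–Schwarz, `d ‖ĉ_k‖² ≤ |supp c| ‖c‖²` for every `k`; summing over
`supp ĉ` shows that `|supp c| |supp ĉ| = d` forces equality at every `k ∈ supp ĉ`. Equality in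
Cauchy–Schwarz means that `η^{kl} c_l` does not depend on `l ∈ supp c`, and comparing two
frequencies `k, k₀` gives `d ∣ (l - l₀)(k - k₀)`. With `g = gcd(d, k - k₀ : k ∈ supp ĉ)`, the
support of `c` lies in the coset `l₀ + (d/g)ℤ` and that of `ĉ` in `k₀ + gℤ`, which have `g` and
`d/g` points, so `supp c` is the whole coset, on which `c_l = c_{l₀} η^{k₀(l₀ - l)}`.
-/

open Finset ComplexConjugate

section LagrangeIdentity

variable {ι F : Type*} [NormedAddCommGroup F] [InnerProductSpace ℝ F]

theorem sum_sum_sq_norm_sub (s : Finset ι) (z : ι → F) :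
    ∑ i ∈ s, ∑ j ∈ s, ‖z i - z j‖ ^ 2 = 2 * (#s * ∑ i ∈ s, ‖z i‖ ^ 2 - ‖∑ i ∈ s, z i‖ ^ 2) := by
  have hsum : ‖∑ i ∈ s, z i‖ ^ 2 = ∑ i ∈ s, ∑ j ∈ s, inner ℝ (z i) (z j) := by
    simp_rw [← real_inner_self_eq_norm_sq, sum_inner, inner_sum]
  simp_rw [norm_sub_sq_real, sum_add_distrib, sum_sub_distrib, ← mul_sum, hsum, sum_const,
    nsmul_eq_mul]
  rw [← mul_sum]
  ring

theorem sq_norm_sum_le_card_mul_sum_sq_norm (s : Finset ι) (z : ι → F) :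
    ‖∑ i ∈ s, z i‖ ^ 2 ≤ #s * ∑ i ∈ s, ‖z i‖ ^ 2 := by
  have hid := sum_sum_sq_norm_sub s z
  have hnonneg : 0 ≤ ∑ i ∈ s, ∑ j ∈ s, ‖z i - z j‖ ^ 2 := by positivity
  linarith

theorem sq_norm_sum_eq_card_mul_sum_sq_norm_iff (s : Finset ι) (z : ι → F) :
    ‖∑ i ∈ s, z i‖ ^ 2 = #s * ∑ i ∈ s, ‖z i‖ ^ 2 ↔ ∀ i ∈ s, ∀ j ∈ s, z i = z j := by
  have hnonneg : ∀ i ∈ s, ∀ j ∈ s, 0 ≤ ‖z i - z j‖ ^ 2 := fun _ _ _ _ => by positivity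
  rw [← sub_eq_zero, ← neg_eq_zero, neg_sub, ← mul_eq_zero_iff_left two_ne_zero,
    ← sum_sum_sq_norm_sub, sum_eq_zero_iff_of_nonneg fun i hi => sum_nonneg (hnonneg i hi)]
  refine forall₂_congr fun i hi => ?_
  simp only [sum_eq_zero_iff_of_nonneg (hnonneg i hi), sq_eq_zero_iff, norm_eq_zero, sub_eq_zero]

end LagrangeIdentity

namespace Matrix

theorem sum_sq_norm_mulVec_of_conjTranspose_mul_self_eq_one {m n 𝕜 : Type*} [Fintype m]
    [Fintype n] [DecidableEq n] [RCLike 𝕜] {A : Matrix m n 𝕜} (hA : Aᴴ * A = 1) (v : n → 𝕜) :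
    ∑ i, ‖(A *ᵥ v) i‖ ^ 2 = ∑ j, ‖v j‖ ^ 2 := by
  have hdot : star (A *ᵥ v) ⬝ᵥ (A *ᵥ v) = star v ⬝ᵥ v := by
    rw [star_mulVec, dotProduct_mulVec, vecMul_vecMul, hA, vecMul_one]
  rw [← RCLike.ofReal_inj (K := 𝕜)]
  push_cast
  simpa only [dotProduct, Pi.star_apply, RCLike.star_def, RCLike.conj_mul] using hdot

end Matrix

section DFT

open Matrix

variable {d : ℕ}

theorem isPrimitiveRoot_eta (hd : d ≠ 0) : IsPrimitiveRoot (eta d) d :=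
  Complex.isPrimitiveRoot_exp d hd

theorem norm_eta_pow (hd : d ≠ 0) (n : ℕ) : ‖eta d ^ n‖ = 1 := by
  rw [norm_pow, (isPrimitiveRoot_eta hd).norm'_eq_one hd, one_pow]

theorem sum_conj_eta_pow_mul_eta_pow (hd : d ≠ 0) (l l' : Fin d) :
    ∑ k : Fin d, conj (eta d ^ ((k : ℕ) * l)) * eta d ^ ((k : ℕ) * l') =
      if l = l' then (d : ℂ) else 0 := by
  have hη := isPrimitiveRoot_eta hd
  set ζ := conj (eta d ^ (l : ℕ)) * eta d ^ (l' : ℕ) with hζ_def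
  have hterm : ∀ k : ℕ, conj (eta d ^ (k * l)) * eta d ^ (k * l') = ζ ^ k := fun k => by
    rw [mul_pow, ← map_pow, ← pow_mul, ← pow_mul, mul_comm (l : ℕ), mul_comm (l' : ℕ)]
  rw [Fin.sum_univ_eq_sum_range (fun k => conj (eta d ^ (k * l)) * eta d ^ (k * l'))]
  simp_rw [hterm]
  split_ifs with h
  · have hζ : ζ = 1 := by
      rw [hζ_def, h, Complex.conj_mul', norm_eta_pow hd, Complex.ofReal_one, one_pow]
    simp [hζ]
  · have hζ : ζ ≠ 1 := fun h1 => by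
      rw [hζ_def, ← Complex.inv_eq_conj (norm_eta_pow hd _),
        inv_mul_eq_one₀ (pow_ne_zero _ (hη.ne_zero hd))] at h1
      exact h (Fin.ext (hη.pow_inj l.2 l'.2 h1))
    have hζd : ζ ^ d = 1 := by
      rw [mul_pow, ← map_pow, ← pow_mul, ← pow_mul, pow_mul', pow_mul' _ (l' : ℕ), hη.pow_eq_one]
      simp
    rw [geom_sum_eq hζ, hζd, sub_self, zero_div]

noncomputable def dftMatrix (d : ℕ) : Matrix (Fin d) (Fin d) ℂ :=
  of fun k l => 1 / (Real.sqrt d : ℂ) * eta d ^ ((k : ℕ) * (l : ℕ))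

theorem dft_eq_dftMatrix_mulVec (c : Fin d → ℂ) : dft d c = dftMatrix d *ᵥ c := by
  ext k
  simp only [dft, dftMatrix, mulVec, dotProduct, of_apply, mul_sum, mul_assoc]

theorem conjTranspose_dftMatrix_mul_dftMatrix (hd : d ≠ 0) :
    (dftMatrix d)ᴴ * dftMatrix d = 1 := by
  ext l l'
  have hnorm : conj (1 / (Real.sqrt d : ℂ)) * (1 / (Real.sqrt d : ℂ)) = 1 / d := by
    rw [map_div₀, map_one, Complex.conj_ofReal, div_mul_div_comm, one_mul, ← Complex.ofReal_mul,
      Real.mul_self_sqrt (Nat.cast_nonneg _), Complex.ofReal_natCast]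
  calc ((dftMatrix d)ᴴ * dftMatrix d) l l'
      = 1 / d * ∑ k : Fin d, conj (eta d ^ ((k : ℕ) * l)) * eta d ^ ((k : ℕ) * l') := by
        simp only [mul_apply, conjTranspose_apply, dftMatrix, of_apply, star_mul',
          RCLike.star_def, mul_sum, ← hnorm]
        exact sum_congr rfl fun _ _ => by ring
    _ = (1 : Matrix (Fin d) (Fin d) ℂ) l l' := by
        rw [sum_conj_eta_pow_mul_eta_pow hd, one_apply]
        split_ifs <;> simp [hd]

theorem sum_sq_norm_dft (hd : d ≠ 0) (c : Fin d → ℂ) :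
    ∑ k, ‖dft d c k‖ ^ 2 = ∑ l, ‖c l‖ ^ 2 := by
  rw [dft_eq_dftMatrix_mulVec]
  exact sum_sq_norm_mulVec_of_conjTranspose_mul_self_eq_one
    (conjTranspose_dftMatrix_mul_dftMatrix hd) c

theorem mul_sq_norm_dft_eq_sq_norm_sum (hd : d ≠ 0) (c : Fin d → ℂ) (k : Fin d) :
    d * ‖dft d c k‖ ^ 2 = ‖∑ l ∈ {l | c l ≠ 0}, eta d ^ ((k : ℕ) * l) * c l‖ ^ 2 := by
  rw [sum_filter_of_ne fun l _ h => right_ne_zero_of_mul h, dft, norm_mul, mul_pow, ← mul_assoc,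
    norm_div, norm_one, Complex.norm_real, Real.norm_eq_abs, abs_of_nonneg (Real.sqrt_nonneg _),
    div_pow, one_pow, Real.sq_sqrt (Nat.cast_nonneg _), mul_one_div_cancel (by exact_mod_cast hd),
    one_mul]

theorem sum_sq_norm_eq_sum_sq_norm_eta_pow_mul (hd : d ≠ 0) (c : Fin d → ℂ) (k : Fin d) :
    ∑ l, ‖c l‖ ^ 2 = ∑ l ∈ {l | c l ≠ 0}, ‖eta d ^ ((k : ℕ) * l) * c l‖ ^ 2 := by
  simp_rw [norm_mul, norm_eta_pow hd, one_mul]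
  exact (sum_filter_of_ne fun l _ h => by simpa using h).symm

theorem mul_sq_norm_dft_le (hd : d ≠ 0) (c : Fin d → ℂ) (k : Fin d) :
    d * ‖dft d c k‖ ^ 2 ≤ suppCard d c * ∑ l, ‖c l‖ ^ 2 := by
  rw [mul_sq_norm_dft_eq_sq_norm_sum hd, sum_sq_norm_eq_sum_sq_norm_eta_pow_mul hd c k]
  exact sq_norm_sum_le_card_mul_sum_sq_norm _ _

theorem mul_sq_norm_dft_eq_iff (hd : d ≠ 0) (c : Fin d → ℂ) (k : Fin d) :
    d * ‖dft d c k‖ ^ 2 = suppCard d c * ∑ l, ‖c l‖ ^ 2 ↔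
      ∀ l, c l ≠ 0 → ∀ l', c l' ≠ 0 →
        eta d ^ ((k : ℕ) * l) * c l = eta d ^ ((k : ℕ) * l') * c l' := by
  rw [mul_sq_norm_dft_eq_sq_norm_sum hd, sum_sq_norm_eq_sum_sq_norm_eta_pow_mul hd c k, suppCard,
    sq_norm_sum_eq_card_mul_sum_sq_norm_iff]
  simp only [mem_filter, mem_univ, true_and]

theorem eta_pow_mul_eq_of_suppCard_mul_eq {c : Fin d → ℂ}
    (heq : suppCard d c * suppCard d (dft d c) = d) {k l l' : Fin d} (hk : dft d c k ≠ 0)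
    (hl : c l ≠ 0) (hl' : c l' ≠ 0) :
    eta d ^ ((k : ℕ) * l) * c l = eta d ^ ((k : ℕ) * l') * c l' := by
  have hd : d ≠ 0 := l.pos.ne'
  refine (mul_sq_norm_dft_eq_iff hd c k).mp ?_ l hl l' hl'
  have hsum : ∑ k ∈ {k | dft d c k ≠ 0}, (d : ℝ) * ‖dft d c k‖ ^ 2 =
      ∑ _k ∈ {k | dft d c k ≠ 0}, (suppCard d c : ℝ) * ∑ l, ‖c l‖ ^ 2 := by
    rw [← mul_sum, sum_filter_of_ne fun k _ h => by simpa using h, sum_sq_norm_dft hd, sum_const,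
      nsmul_eq_mul, ← suppCard]
    nth_rw 1 [← heq]
    push_cast
    ring
  exact (sum_eq_sum_iff_of_le fun k _ => mul_sq_norm_dft_le hd c k).mp hsum k (by simpa using hk)

end DFT

theorem IsPrimitiveRoot.dvd_sub_mul_sub_of_pow_mul_eq {R : Type*} [CommRing R] [IsDomain R]
    {ζ : R} {d : ℕ} (hζ : IsPrimitiveRoot ζ d) (hd : d ≠ 0) {a b : R} (ha : a ≠ 0) (hb : b ≠ 0)
    {k k₀ l l₀ : ℕ} (hk : ζ ^ (k * l) * a = ζ ^ (k * l₀) * b)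
    (hk₀ : ζ ^ (k₀ * l) * a = ζ ^ (k₀ * l₀) * b) :
    (d : ℤ) ∣ ((l : ℤ) - l₀) * ((k : ℤ) - k₀) := by
  have hpow : ζ ^ (k * l₀ + k₀ * l) = ζ ^ (k * l + k₀ * l₀) := by
    refine mul_right_cancel₀ (mul_ne_zero ha hb) ?_
    linear_combination (ζ ^ (k * l₀) * b) * hk₀ - (ζ ^ (k₀ * l₀) * b) * hk
  rw [(hζ.isOfFinOrder hd).pow_eq_pow_iff_modEq, ← hζ.eq_orderOf, Nat.modEq_iff_dvd] at hpow
  convert hpow using 1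
  push_cast
  ring

theorem card_filter_dvd_sub_le {d m : ℕ} (hm : m ∣ d) (r : ℤ) :
    #{l : Fin d | (m : ℤ) ∣ l - r} ≤ d / m := by
  rw [← card_range (d / m)]
  refine card_le_card_of_injOn (fun l => (l : ℕ) / m) (fun l _ => ?_) fun l hl l' hl' hll' => ?_
  · simpa using Nat.div_lt_div_of_lt_of_dvd hm l.2
  · simp only [coe_filter, mem_univ, true_and, Set.mem_ofPred_eq] at hl hl'
    have hdiv : (l : ℕ) / m = l' / m := hll'
    have hmod : (l' : ℕ) % m = l % m := Nat.modEq_iff_dvd.mpr (by simpa using dvd_sub hl hl')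
    exact Fin.ext (by rw [← Nat.div_add_mod l m, ← Nat.div_add_mod l' m, hdiv, hmod])

theorem Nat.dvd_mul_gcd_of_forall_dvd_mul {ι : Type*} (s : Finset ι) (f : ι → ℕ) {n a : ℕ}
    (h : ∀ i ∈ s, n ∣ a * f i) : n ∣ a * n.gcd (s.gcd f) := by
  rw [← Nat.gcd_mul_left, ← normalize_eq a, ← Finset.gcd_mul_left]
  exact Nat.dvd_gcd (dvd_mul_left n _) (Finset.dvd_gcd h)

theorem exists_dvd_eq_filter_dvd_sub_of_dvd_mul {d : ℕ} {T Ω : Finset (Fin d)} (l₀ k₀ : ℤ)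
    (hdvd : ∀ l ∈ T, ∀ k ∈ Ω, (d : ℤ) ∣ ((l : ℤ) - l₀) * ((k : ℤ) - k₀))
    (hcard : d ≤ #T * #Ω) :
    ∃ m, m ∣ d ∧ T = ({l | (m : ℤ) ∣ (l : ℤ) - l₀} : Finset (Fin d)) := by
  obtain rfl | hd := d.eq_zero_or_pos
  · exact ⟨0, dvd_rfl, Subsingleton.elim _ _⟩
  set g := d.gcd (Ω.gcd fun k => ((k : ℤ) - k₀).natAbs)
  set m := d / g
  have hgd : g ∣ d := Nat.gcd_dvd_left _ _
  have hmd : m ∣ d := Nat.div_dvd_of_dvd hgd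
  have hg : 0 < g := Nat.gcd_pos_of_pos_left _ hd
  have hgm : g * m = d := Nat.mul_div_cancel' hgd
  have hΩ : Ω ⊆ ({k | (g : ℤ) ∣ (k : ℤ) - k₀} : Finset (Fin d)) := fun k hk => by
    simpa [Int.natCast_dvd] using (Nat.gcd_dvd_right _ _).trans (Finset.gcd_dvd hk)
  have hT : T ⊆ ({l | (m : ℤ) ∣ (l : ℤ) - l₀} : Finset (Fin d)) := fun l hl => by
    have hlg : g * m ∣ g * ((l : ℤ) - l₀).natAbs := by
      rw [hgm, mul_comm]
      exact Nat.dvd_mul_gcd_of_forall_dvd_mul _ _ fun k hk => by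
        simpa [Int.natCast_dvd, Int.natAbs_mul] using hdvd l hl k hk
    simpa [Int.natCast_dvd] using Nat.dvd_of_mul_dvd_mul_left hg hlg
  have hcard_m : #{l : Fin d | (m : ℤ) ∣ l - l₀} ≤ g :=
    (card_filter_dvd_sub_le hmd _).trans (Nat.div_div_self hgd hd.ne').le
  have hgT : g ≤ #T := by
    refine Nat.le_of_mul_le_mul_right ?_ (Nat.div_pos (Nat.le_of_dvd hd hgd) hg)
    calc g * m = d := hgm
      _ ≤ #T * #Ω := hcard
      _ ≤ #T * m := Nat.mul_le_mul_left _ ((card_le_card hΩ).trans (card_filter_dvd_sub_le hgd _))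
  exact ⟨m, hmd, eq_of_subset_of_card_le hT (hcard_m.trans hgT)⟩

theorem form_of_support_uncertainty_equality (d : ℕ) (c : Fin d → ℂ) (hc : c ≠ 0)
    (heq : suppCard d c * suppCard d (dft d c) = d) :
    ∃ (d₁ : ℕ) (α : ℂ) (β γ : ℤ), d₁ ∣ d ∧ α ≠ 0 ∧
      ∀ l : Fin d, c l =
        α * eta d ^ (β * (l : ℕ)) * (if ((l : ℕ) + γ) % (d₁ : ℤ) = 0 then 1 else 0) := by
  obtain ⟨l₀, hl₀⟩ := Function.ne_iff.mp hc
  have hd : d ≠ 0 := l₀.pos.ne'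
  have hη := isPrimitiveRoot_eta hd
  obtain ⟨k₀, hk₀⟩ : ∃ k, dft d c k ≠ 0 := by
    simpa [suppCard, card_eq_zero, filter_eq_empty_iff] using
      right_ne_zero_of_mul (heq.trans_ne hd)
  obtain ⟨m, hmd, hsupp⟩ := exists_dvd_eq_filter_dvd_sub_of_dvd_mul
    (T := {l | c l ≠ 0}) (Ω := {k | dft d c k ≠ 0}) l₀ k₀ (fun l hl k hk => by
      simp only [mem_filter, mem_univ, true_and] at hl hk
      exact hη.dvd_sub_mul_sub_of_pow_mul_eq hd hl hl₀
        (eta_pow_mul_eq_of_suppCard_mul_eq heq hk hl hl₀)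
        (eta_pow_mul_eq_of_suppCard_mul_eq heq hk₀ hl hl₀)) heq.ge
  refine ⟨m, eta d ^ ((k₀ : ℕ) * l₀) * c l₀, -k₀, -l₀, hmd,
    mul_ne_zero (pow_ne_zero _ (hη.ne_zero hd)) hl₀, fun l => ?_⟩
  have hmem : c l ≠ 0 ↔ ((l : ℕ) + -((l₀ : ℕ) : ℤ)) % (m : ℤ) = 0 := by
    simpa [← sub_eq_add_neg, ← Int.dvd_iff_emod_eq_zero] using Finset.ext_iff.mp hsupp l
  by_cases hl : c l = 0
  · simp [hl, ← hmem]
  · rw [if_pos (hmem.mp hl), mul_one, neg_mul, zpow_neg, ← Nat.cast_mul, zpow_natCast,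
      ← eta_pow_mul_eq_of_suppCard_mul_eq heq hk₀ hl hl₀, mul_comm _ (c l),
      mul_inv_cancel_right₀ (pow_ne_zero _ (hη.ne_zero hd))]
end

section
/- For any unit vector c ∈ ℂ^d with discrete Fourier transform ĉ, the Shannon entropies satisfy S({|c_l|²}) + S({|ĉ_k|²}) ≥ log d. -/
open scoped BigOperators Classical ComplexOrder

/-- Shannon entropy of a probability vector. -/
noncomputable def shannonEntropy (d : ℕ) (p : Fin d → ℝ) : ℝ :=
  -∑ i, p i * Real.log (p i)

/-!
Hirschman's argument. For `0 ≤ t < 1` put `p = 2/(1+t)` and `q = 2/(1-t)`. The Hausdorff–Young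
inequality `‖ĉ‖_q ≤ d^(-t/2) ‖c‖_p` follows from the three-lines theorem applied to
`z ↦ ∑_l (DFT b(z))_l c(z)_l`, where `b(z)` and `c(z)` keep the phases of `conj ĉ` and `c` and
raise their moduli to powers affine in `z`: on `Re z = 0` it is bounded through unitarity of the
DFT, on `Re z = 1` through `|DFT b| ≤ d^(-1/2) ‖b‖₁`, and at `z = t` it equals `‖ĉ‖_q^q`.
At `t = 0` the inequality is Parseval's identity, so the right derivative at `0` of the gap
between the logarithms of its two sides is `≤ 0`; that derivative is
`(log d - S(|c|²) - S(|ĉ|²))/2`.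
-/

open Finset ComplexConjugate Filter Topology

lemma norm_eta (d : ℕ) : ‖eta d‖ = 1 := by
  rw [eta, Complex.norm_exp]
  norm_num [Complex.div_re]

lemma sum_eta_pow_mul_conj {d : ℕ} (hd : d ≠ 0) (l m : Fin d) :
    ∑ k : Fin d, eta d ^ ((k : ℕ) * l) * conj (eta d ^ ((k : ℕ) * m))
      = if l = m then (d : ℂ) else 0 := by
  have hη : IsPrimitiveRoot (eta d) d := Complex.isPrimitiveRoot_exp d hd
  have hη0 (n : ℕ) : eta d ^ n ≠ 0 := pow_ne_zero _ (Complex.exp_ne_zero _)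
  set ζ := eta d ^ (l : ℕ) * (eta d ^ (m : ℕ))⁻¹
  have hterm (k : Fin d) :
      eta d ^ ((k : ℕ) * l) * conj (eta d ^ ((k : ℕ) * m)) = ζ ^ (k : ℕ) := by
    rw [← Complex.inv_eq_conj (by rw [norm_pow, norm_eta, one_pow]), mul_pow, inv_pow,
      ← pow_mul, ← pow_mul, mul_comm (l : ℕ), mul_comm (m : ℕ)]
  simp only [hterm]
  split_ifs with hlm
  · simp [ζ, hlm, hη0]
  · have hζ : ζ ≠ 1 := fun h ↦ hlm <| Fin.ext <| hη.pow_inj l.isLt m.isLt <|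
      (mul_inv_eq_one₀ (hη0 _)).mp h
    have hζd : ζ ^ d = 1 := by
      rw [mul_pow, inv_pow, ← pow_mul, ← pow_mul, mul_comm (l : ℕ), mul_comm (m : ℕ), pow_mul,
        pow_mul, hη.pow_eq_one, one_pow, one_pow, inv_one, mul_one]
    rw [Fin.sum_univ_eq_sum_range (ζ ^ ·), geom_sum_eq hζ, hζd]
    simp

lemma sum_norm_sq_dft {d : ℕ} (hd : d ≠ 0) (v : Fin d → ℂ) :
    ∑ k, ‖dft d v k‖ ^ 2 = ∑ l, ‖v l‖ ^ 2 := by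
  have hsqrt : (Real.sqrt d : ℂ) * (Real.sqrt d : ℂ) = d := by
    rw [← Complex.ofReal_mul, Real.mul_self_sqrt (Nat.cast_nonneg d), Complex.ofReal_natCast]
  suffices ∑ k, dft d v k * conj (dft d v k) = ∑ l, v l * conj (v l) by
    simpa only [Complex.mul_conj', ← Complex.ofReal_pow, ← Complex.ofReal_sum,
      Complex.ofReal_inj] using this
  calc ∑ k, dft d v k * conj (dft d v k)
      = (d : ℂ)⁻¹ * ∑ m : Fin d, ∑ l : Fin d,
          (∑ k : Fin d, eta d ^ ((k : ℕ) * l) * conj (eta d ^ ((k : ℕ) * m)))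
            * (v l * conj (v m)) := by
        simp only [dft, map_mul, map_sum, map_div₀, map_one, Complex.conj_ofReal, mul_sum, sum_mul]
        rw [sum_comm]
        refine sum_congr rfl fun m _ ↦ ?_
        rw [sum_comm]
        refine sum_congr rfl fun l _ ↦ sum_congr rfl fun k _ ↦ ?_
        rw [← hsqrt]
        field_simp
    _ = ∑ l, v l * conj (v l) := by
        simp only [sum_eta_pow_mul_conj hd, ite_mul, zero_mul, sum_ite_eq', mem_univ, if_true,
          mul_sum]
        refine sum_congr rfl fun l _ ↦ ?_
        field_simp

lemma sum_dft_mul_comm {d : ℕ} (a b : Fin d → ℂ) :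
    ∑ l, dft d b l * a l = ∑ k, b k * dft d a k := by
  simp only [dft, sum_mul, mul_sum]
  rw [sum_comm]
  refine sum_congr rfl fun k _ ↦ sum_congr rfl fun l _ ↦ ?_
  rw [mul_comm (k : ℕ)]
  ring

lemma norm_dft_le {d : ℕ} (b : Fin d → ℂ) (l : Fin d) :
    ‖dft d b l‖ ≤ 1 / √d * ∑ k, ‖b k‖ := by
  rw [dft, norm_mul, norm_div, norm_one, Complex.norm_real,
    Real.norm_of_nonneg (Real.sqrt_nonneg _)]
  gcongr
  refine (norm_sum_le _ _).trans_eq (sum_congr rfl fun k _ ↦ ?_)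
  rw [norm_mul, norm_pow, norm_eta, one_pow, one_mul]

lemma norm_sum_dft_mul_le {d : ℕ} (b y : Fin d → ℂ) :
    ‖∑ l, dft d b l * y l‖ ≤ 1 / √d * (∑ k, ‖b k‖) * ∑ l, ‖y l‖ := by
  rw [mul_sum]
  refine (norm_sum_le _ _).trans (sum_le_sum fun l _ ↦ ?_)
  rw [norm_mul]
  gcongr
  exact norm_dft_le b l

lemma norm_sum_dft_mul_le_sqrt_mul_sqrt {d : ℕ} (hd : d ≠ 0) (b y : Fin d → ℂ) :
    ‖∑ l, dft d b l * y l‖ ≤ √(∑ k, ‖b k‖ ^ 2) * √(∑ l, ‖y l‖ ^ 2) := by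
  rw [← sum_norm_sq_dft hd b]
  refine (norm_sum_le _ _).trans ?_
  simpa only [norm_mul] using Real.sum_mul_le_sqrt_mul_sqrt univ (‖dft d b ·‖) (‖y ·‖)

noncomputable def cpowPhase (w a : ℂ) : ℂ := if a = 0 then 0 else (‖a‖ : ℂ) ^ (w - 1) * a

lemma cpowPhase_one (a : ℂ) : cpowPhase 1 a = a := by
  by_cases ha : a = 0 <;> simp [cpowPhase, ha]

lemma norm_cpowPhase (a : ℂ) {w : ℂ} (hw : 0 < w.re) : ‖cpowPhase w a‖ = ‖a‖ ^ w.re := by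
  by_cases ha : a = 0
  · simp [cpowPhase, ha, Real.zero_rpow hw.ne']
  · have ha' : 0 < ‖a‖ := norm_pos_iff.mpr ha
    rw [cpowPhase, if_neg ha, norm_mul, Complex.norm_cpow_eq_rpow_re_of_pos ha', Complex.sub_re,
      Complex.one_re, Real.rpow_sub_one ha'.ne', div_mul_cancel₀ _ ha'.ne']

lemma differentiable_cpowPhase (a : ℂ) : Differentiable ℂ (cpowPhase · a) := by
  by_cases ha : a = 0
  · simp only [cpowPhase, if_pos ha]
    exact differentiable_const 0
  · simp only [cpowPhase, if_neg ha]
    refine (Differentiable.const_cpow (differentiable_id.sub_const 1) (Or.inl ?_)).mul_const a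
    exact Complex.ofReal_ne_zero.mpr (norm_ne_zero_iff.mpr ha)

lemma cpowPhase_ofReal_conj_mul (a : ℂ) {x : ℝ} (hx : x ≠ -1) :
    cpowPhase x (conj a) * a = ((‖a‖ ^ (x + 1) : ℝ) : ℂ) := by
  by_cases ha : a = 0
  · simp [cpowPhase, ha, Real.zero_rpow (show x + 1 ≠ 0 by contrapose! hx; linarith)]
  · have ha' : 0 < ‖a‖ := norm_pos_iff.mpr ha
    rw [cpowPhase, if_neg ((map_ne_zero _).mpr ha), Complex.norm_conj, mul_assoc,
      Complex.conj_mul', ← Complex.ofReal_one, ← Complex.ofReal_sub,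
      ← Complex.ofReal_cpow ha'.le, ← Complex.ofReal_pow, ← Complex.ofReal_mul,
      ← Real.rpow_natCast, ← Real.rpow_add ha']
    ring_nf

lemma rpow_le_max_one_rpow {s e e' : ℝ} (hs : 0 ≤ s) (he : 0 ≤ e) (hee' : e ≤ e') :
    s ^ e ≤ max 1 s ^ e' :=
  (Real.rpow_le_rpow hs (le_max_right 1 s) he).trans
    (Real.rpow_le_rpow_of_exponent_le (le_max_left 1 s) hee')

noncomputable def rieszThorinFamily (d : ℕ) (x y : Fin d → ℂ) (α β : ℝ) (z : ℂ) : ℂ :=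
  ∑ l, dft d (fun k ↦ cpowPhase (α * (1 + z)) (x k)) l * cpowPhase (β * (1 + z)) (y l)

section rieszThorinFamily

open Complex.HadamardThreeLines

variable {d : ℕ} (x y : Fin d → ℂ) {α β : ℝ}

lemma differentiable_rieszThorinFamily (α β : ℝ) :
    Differentiable ℂ (rieszThorinFamily d x y α β) := by
  have hphase (γ : ℝ) (a : ℂ) : Differentiable ℂ (fun z : ℂ ↦ cpowPhase (γ * (1 + z)) a) :=
    (differentiable_cpowPhase a).comp (by fun_prop)
  unfold rieszThorinFamily dft
  refine Differentiable.fun_sum fun l _ ↦ (Differentiable.mul ?_ (hphase β (y l)))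
  exact (Differentiable.fun_sum fun k _ ↦ (hphase α (x k)).const_mul _).const_mul _

lemma norm_rieszThorinFamily_le (hα : 0 < α) (hβ : 0 < β) {z : ℂ} (hz : 0 ≤ z.re) :
    ‖rieszThorinFamily d x y α β z‖
      ≤ 1 / √d * (∑ k, ‖x k‖ ^ (α * (1 + z.re))) * ∑ l, ‖y l‖ ^ (β * (1 + z.re)) := by
  have hphase {γ : ℝ} (hγ : 0 < γ) (a : ℂ) :
      ‖cpowPhase (γ * (1 + z)) a‖ = ‖a‖ ^ (γ * (1 + z.re)) := by
    rw [norm_cpowPhase a] <;> simp only [Complex.re_ofReal_mul, Complex.add_re, Complex.one_re]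
    positivity
  refine (norm_sum_dft_mul_le _ _).trans_eq ?_
  simp only [hphase hα, hphase hβ]

lemma norm_rieszThorinFamily_le_of_re_eq_zero (hd : d ≠ 0) (hα : 0 < α) (hβ : 0 < β) {z : ℂ}
    (hz : z.re = 0) :
    ‖rieszThorinFamily d x y α β z‖ ≤ √(∑ k, ‖x k‖ ^ (2 * α)) * √(∑ l, ‖y l‖ ^ (2 * β)) := by
  have hphase {γ : ℝ} (hγ : 0 < γ) (a : ℂ) : ‖cpowPhase (γ * (1 + z)) a‖ ^ 2 = ‖a‖ ^ (2 * γ) := by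
    rw [norm_cpowPhase a (by simpa [hz] using hγ), ← Real.rpow_natCast,
      ← Real.rpow_mul (norm_nonneg a)]
    simp [hz, mul_comm]
  refine (norm_sum_dft_mul_le_sqrt_mul_sqrt hd _ _).trans_eq ?_
  simp only [hphase hα, hphase hβ]

lemma bddAbove_norm_rieszThorinFamily (hα : 0 < α) (hβ : 0 < β) :
    BddAbove ((norm ∘ rieszThorinFamily d x y α β) '' verticalClosedStrip 0 1) := by
  refine ⟨1 / √d * (∑ k, max 1 ‖x k‖ ^ (2 * α)) * ∑ l, max 1 ‖y l‖ ^ (2 * β), ?_⟩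
  rintro _ ⟨z, ⟨hz0, hz1⟩, rfl⟩
  refine (norm_rieszThorinFamily_le x y hα hβ hz0).trans ?_
  gcongr with k _ l _
  · exact rpow_le_max_one_rpow (norm_nonneg _) (by positivity) (by nlinarith)
  · exact rpow_le_max_one_rpow (norm_nonneg _) (by positivity) (by nlinarith)

lemma norm_rieszThorinFamily_le_interp (hd : d ≠ 0) (hα : 0 < α) (hβ : 0 < β) {z : ℂ}
    (hz : z.re ∈ Set.Icc 0 1) :
    ‖rieszThorinFamily d x y α β z‖
      ≤ (√(∑ k, ‖x k‖ ^ (2 * α)) * √(∑ l, ‖y l‖ ^ (2 * β))) ^ (1 - z.re)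
        * (1 / √d * (∑ k, ‖x k‖ ^ (2 * α)) * ∑ l, ‖y l‖ ^ (2 * β)) ^ z.re := by
  have hedge₁ (w : ℂ) (hw : w.re = 1) : ‖rieszThorinFamily d x y α β w‖
      ≤ 1 / √d * (∑ k, ‖x k‖ ^ (2 * α)) * ∑ l, ‖y l‖ ^ (2 * β) := by
    have := norm_rieszThorinFamily_le x y hα hβ (z := w) (by simp [hw])
    rwa [hw, one_add_one_eq_two, mul_comm α, mul_comm β] at this
  simpa only [sub_zero, div_one] using norm_le_interp_of_mem_verticalClosedStrip' zero_lt_one hz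
    (differentiable_rieszThorinFamily x y α β).diffContOnCl
    (bddAbove_norm_rieszThorinFamily x y hα hβ)
    (fun w hw ↦ norm_rieszThorinFamily_le_of_re_eq_zero x y hd hα hβ hw) hedge₁

end rieszThorinFamily

lemma rieszThorinFamily_conj_dft {d : ℕ} (c : Fin d → ℂ) {t : ℝ} (ht₁ : 1 - t ≠ 0)
    (ht₂ : 1 + t ≠ 0) :
    rieszThorinFamily d (fun k ↦ conj (dft d c k)) c (1 - t)⁻¹ (1 + t)⁻¹ t
      = ((∑ k, ‖dft d c k‖ ^ (2 * (1 - t)⁻¹) : ℝ) : ℂ) := by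
  have hβ : ((1 + t)⁻¹ : ℝ) * (1 + (t : ℂ)) = 1 := by
    rw [← Complex.ofReal_one, ← Complex.ofReal_add, ← Complex.ofReal_mul, inv_mul_cancel₀ ht₂,
      Complex.ofReal_one]
  have hα : ((1 - t)⁻¹ : ℝ) * (1 + (t : ℂ)) = (((1 - t)⁻¹ * (1 + t) : ℝ) : ℂ) := by
    push_cast
    ring
  have hne : (1 - t)⁻¹ * (1 + t) ≠ -1 := by
    rw [inv_mul_eq_div, Ne, div_eq_iff ht₁]
    intro h
    linarith
  rw [rieszThorinFamily, hβ, Complex.ofReal_sum]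
  simp only [cpowPhase_one, sum_dft_mul_comm, hα, cpowPhase_ofReal_conj_mul _ hne]
  refine sum_congr rfl fun k _ ↦ ?_
  congr 3
  field_simp
  ring

lemma sum_rpow_norm_pos {ι : Type*} [Fintype ι] {v : ι → ℂ} (hv : v ≠ 0) (r : ℝ) :
    0 < ∑ i, ‖v i‖ ^ r := by
  obtain ⟨i, hi⟩ := Function.ne_iff.mp hv
  exact sum_pos' (fun j _ ↦ by positivity)
    ⟨i, mem_univ i, Real.rpow_pos_of_pos (norm_pos_iff.mpr hi) r⟩

lemma dft_ne_zero {d : ℕ} (hd : d ≠ 0) {c : Fin d → ℂ} (hc : c ≠ 0) : dft d c ≠ 0 := by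
  intro h
  have hsum : ∑ l, ‖c l‖ ^ 2 = 0 := by simpa [h] using (sum_norm_sq_dft hd c).symm
  refine hc (funext fun l ↦ ?_)
  simpa using (sum_eq_zero_iff_of_nonneg fun l _ ↦ sq_nonneg ‖c l‖).mp hsum l (mem_univ l)

lemma log_sum_rpow_dft_le {d : ℕ} (hd : d ≠ 0) {c : Fin d → ℂ} (hc : c ≠ 0) {t : ℝ}
    (ht₀ : 0 ≤ t) (ht₁ : t < 1) :
    (1 - t) / 2 * Real.log (∑ k, (‖dft d c k‖ ^ 2) ^ (1 - t)⁻¹)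
      ≤ -(t / 2) * Real.log d + (1 + t) / 2 * Real.log (∑ l, (‖c l‖ ^ 2) ^ (1 + t)⁻¹) := by
  have hsq (a : ℂ) (r : ℝ) : (‖a‖ ^ 2) ^ r = ‖a‖ ^ (2 * r) := by
    rw [← Real.rpow_natCast, ← Real.rpow_mul (norm_nonneg a), Nat.cast_ofNat]
  simp only [hsq]
  set B := ∑ k, ‖dft d c k‖ ^ (2 * (1 - t)⁻¹)
  set P := ∑ l, ‖c l‖ ^ (2 * (1 + t)⁻¹)
  have hB : 0 < B := sum_rpow_norm_pos (dft_ne_zero hd hc) _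
  have hP : 0 < P := sum_rpow_norm_pos hc _
  have hD : (0 : ℝ) < d := by positivity
  have hinterp : B ≤ (√B * √P) ^ (1 - t) * (1 / √d * B * P) ^ t := by
    have := norm_rieszThorinFamily_le_interp (fun k ↦ conj (dft d c k)) c hd
      (inv_pos.mpr (sub_pos.mpr ht₁)) (by positivity : 0 < (1 + t)⁻¹) (z := t) ⟨ht₀, ht₁.le⟩
    rw [rieszThorinFamily_conj_dft c (by linarith) (by linarith), Complex.norm_real,
      Real.norm_of_nonneg hB.le, Complex.ofReal_re] at this
    simpa only [Complex.norm_conj] using this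
  have hlog := Real.log_le_log hB hinterp
  rw [Real.log_mul (by positivity) (by positivity), Real.log_rpow (by positivity),
    Real.log_rpow (by positivity), Real.log_mul (by positivity) hP.ne',
    Real.log_mul (by positivity) hB.ne', Real.log_mul (by positivity) (by positivity),
    Real.log_sqrt hB.le, Real.log_sqrt hP.le, one_div, Real.log_inv, Real.log_sqrt hD.le] at hlog
  nlinarith

lemma HasDerivAt.nonpos_of_eventually_le_right {g : ℝ → ℝ} {g' a : ℝ} (hg : HasDerivAt g g' a)
    (hle : ∀ᶠ t in 𝓝[≥] a, g t ≤ g a) : g' ≤ 0 := by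
  have hseg : segment ℝ a (a + 1) ⊆ Set.Ici a := by
    rw [segment_eq_Icc (by linarith)]
    exact Set.Icc_subset_Ici_self
  simpa using IsLocalMaxOn.hasFDerivWithinAt_nonpos hle hg.hasDerivWithinAt.hasFDerivWithinAt
    (mem_posTangentConeAt_of_segment_subset hseg)

lemma hasDerivAt_sum_rpow {ι : Type*} [Fintype ι] {p : ι → ℝ} (hp : ∀ i, 0 ≤ p i) :
    HasDerivAt (fun s : ℝ ↦ ∑ i, p i ^ s) (∑ i, p i * Real.log (p i)) 1 := by
  refine HasDerivAt.fun_sum fun i _ ↦ ?_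
  rcases (hp i).eq_or_lt with h | h
  · rw [← h, zero_mul]
    refine (hasDerivAt_const (1 : ℝ) (0 : ℝ)).congr_of_eventuallyEq ?_
    filter_upwards [eventually_ne_nhds one_ne_zero] with s hs
    rw [Real.zero_rpow hs]
  · simpa using (Real.hasStrictDerivAt_const_rpow h 1).hasDerivAt

lemma HasDerivAt.log_sum_rpow {ι : Type*} [Fintype ι] {p : ι → ℝ} (hp : ∀ i, 0 ≤ p i)
    (hp₁ : ∑ i, p i = 1) {u : ℝ → ℝ} {u' a : ℝ} (hu : HasDerivAt u u' a) (hua : u a = 1) :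
    HasDerivAt (fun t ↦ Real.log (∑ i, p i ^ u t)) (u' * ∑ i, p i * Real.log (p i)) a := by
  have hsum : ∑ i, p i ^ u a = 1 := by simpa [hua] using hp₁
  have hs : HasDerivAt (fun s : ℝ ↦ ∑ i, p i ^ s) (∑ i, p i * Real.log (p i)) (u a) :=
    hua ▸ hasDerivAt_sum_rpow hp
  simpa [hsum, mul_comm] using (hs.comp a hu).log (by simp [hsum])

theorem entropic_uncertainty (d : ℕ) (c : Fin d → ℂ)
    (hc : ∑ l, ‖c l‖ ^ 2 = 1) :
    Real.log d ≤ shannonEntropy d (fun l => ‖c l‖ ^ 2)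
      + shannonEntropy d (fun k => ‖dft d c k‖ ^ 2) := by
  have hd : d ≠ 0 := by rintro rfl; simp at hc
  have hc₀ : c ≠ 0 := by rintro rfl; simp at hc
  have hĉ : ∑ k, ‖dft d c k‖ ^ 2 = 1 := (sum_norm_sq_dft hd c).trans hc
  set g : ℝ → ℝ := fun t ↦ t / 2 * Real.log d
      + (1 - t) / 2 * Real.log (∑ k, (‖dft d c k‖ ^ 2) ^ (1 - t)⁻¹)
      - (1 + t) / 2 * Real.log (∑ l, (‖c l‖ ^ 2) ^ (1 + t)⁻¹)
  have hg : HasDerivAt g ((Real.log d - shannonEntropy d (fun l => ‖c l‖ ^ 2)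
      - shannonEntropy d (fun k => ‖dft d c k‖ ^ 2)) / 2) 0 := by
    have hinv₁ : HasDerivAt (fun t : ℝ ↦ (1 - t)⁻¹) 1 0 := by
      simpa using ((hasDerivAt_id' (0 : ℝ)).const_sub 1).fun_inv (by norm_num)
    have hinv₂ : HasDerivAt (fun t : ℝ ↦ (1 + t)⁻¹) (-1) 0 := by
      simpa using ((hasDerivAt_id' (0 : ℝ)).const_add 1).fun_inv (by norm_num)
    have hq := HasDerivAt.log_sum_rpow (fun k ↦ sq_nonneg ‖dft d c k‖) hĉ hinv₁ (by norm_num)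
    have hp := HasDerivAt.log_sum_rpow (fun l ↦ sq_nonneg ‖c l‖) hc hinv₂ (by norm_num)
    refine HasDerivAt.congr_deriv ((((hasDerivAt_id' (0 : ℝ)).div_const 2).mul_const _).add
      ((((hasDerivAt_id' (0 : ℝ)).const_sub 1).div_const 2).mul hq) |>.sub
      ((((hasDerivAt_id' (0 : ℝ)).const_add 1).div_const 2).mul hp)) ?_
    simp only [shannonEntropy, sub_zero, add_zero, inv_one, Real.rpow_one, hĉ, hc, Real.log_one]
    ring
  have hg₀ : g 0 = 0 := by simp [g, hc, hĉ]
  have hmax : ∀ᶠ t in 𝓝[≥] 0, g t ≤ g 0 := by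
    filter_upwards [Ico_mem_nhdsGE zero_lt_one] with t ⟨ht₀, ht₁⟩
    rw [hg₀]
    dsimp only [g]
    linarith [log_sum_rpow_dft_le hd hc₀ ht₀ ht₁]
  linarith [hg.nonpos_of_eventually_le_right hmax]
end
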